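/- arXiv:2310.06141 — 2 statements merged into one kernel-verified Lean document; each statement's English description precedes it below -/
import Mathlib

section
/- For every ρ with 0 < ρ < 1 there exists a network instance (a directed graph, linear link costs, a single two-stage application) and a feasible forwarding/offloading strategy φ satisfying the KKT condition (for every node i and out-direction j: ∂D/∂φ_{ij} = min_{j'} ∂D/∂φ_{ij'} if φ_{ij} > 0, and ∂D/∂φ_{ij} ≥ min_{j'} ∂D/∂φ_{ij'} if φ_{ij} = 0), such that D(φ*)/D(φ) = ρ where φ* is a global optimum. In particular, KKT points can be arbitrarily suboptimal. -/
/-! KKT points can be arbitrarily suboptimal (Proposition 1).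

We model a single two-stage application (stage 0 = data, stage 1 = results after one
computation task) on a network with node set `Fin n`, linear link costs `c0, c1` (per stage),
linear computation costs `cc`, exogenous data inputs `r`, and destination `d`.
A strategy consists of forwarding/offloading fractions `φ0 φ1 : Fin n → Option (Fin n) → ℝ`,
where direction `none` is the local CPU (offloading); stage-1 flows are never computed again
and exit at the destination `d`. -/

/-- Feasibility of a forwarding/offloading strategy. -/
def FeasibleStrategy (n : ℕ) (d : Fin n) (φ0 φ1 : Fin n → Option (Fin n) → ℝ) : Prop :=
  (∀ i o, 0 ≤ φ0 i o) ∧ (∀ i o, 0 ≤ φ1 i o) ∧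
  (∀ i, ∑ o, φ0 i o = 1) ∧
  (∀ i, φ1 i none = 0) ∧
  (∀ i, i ≠ d → ∑ o, φ1 i o = 1) ∧
  (∀ o, φ1 d o = 0)

/-- The traffic equations determining node traffics `t0, t1` from inputs and strategy. -/
def TrafficEq (n : ℕ) (r : Fin n → ℝ) (φ0 φ1 : Fin n → Option (Fin n) → ℝ)
    (t0 t1 : Fin n → ℝ) : Prop :=
  (∀ i, t0 i = r i + ∑ j, t0 j * φ0 j (some i)) ∧
  (∀ i, t1 i = t0 i * φ0 i none + ∑ j, t1 j * φ1 j (some i))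

/-- Total (linear) network cost: transmission cost of both stages plus computation cost. -/
def TotalCost (n : ℕ) (c0 c1 : Fin n → Fin n → ℝ) (cc : Fin n → ℝ)
    (φ0 φ1 : Fin n → Option (Fin n) → ℝ) (t0 t1 : Fin n → ℝ) : ℝ :=
  (∑ i, ∑ j, c0 i j * (t0 i * φ0 i (some j))) +
  (∑ i, ∑ j, c1 i j * (t1 i * φ1 i (some j))) +
  (∑ i, cc i * (t0 i * φ0 i none))

/-- The recursive marginal costs `h0 i = ∂D/∂t0 i`, `h1 i = ∂D/∂t1 i` for linear costs. -/
def MarginalEq (n : ℕ) (c0 c1 : Fin n → Fin n → ℝ) (cc : Fin n → ℝ)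
    (φ0 φ1 : Fin n → Option (Fin n) → ℝ) (h0 h1 : Fin n → ℝ) : Prop :=
  (∀ i, h1 i = ∑ j, φ1 i (some j) * (c1 i j + h1 j)) ∧
  (∀ i, h0 i = φ0 i none * (cc i + h1 i) + ∑ j, φ0 i (some j) * (c0 i j + h0 j))

/-- The KKT condition \eqref{Condition_KKT}: the partial derivative
`∂D/∂φ_{ij} = t_i · δ_{ij}` equals the minimum over out-directions wherever `φ_{ij} > 0`,
and is `≥` the minimum where `φ_{ij} = 0`. -/
def KKTCondition (n : ℕ) (d : Fin n) (c0 c1 : Fin n → Fin n → ℝ) (cc : Fin n → ℝ)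
    (φ0 φ1 : Fin n → Option (Fin n) → ℝ) (t0 t1 h0 h1 : Fin n → ℝ) : Prop :=
  (∀ i o,
    (0 < φ0 i o →
      t0 i * (o.elim (cc i + h1 i) (fun j => c0 i j + h0 j)) =
        Finset.univ.inf' Finset.univ_nonempty
          (fun o' : Option (Fin n) => t0 i * (o'.elim (cc i + h1 i) (fun j => c0 i j + h0 j)))) ∧
    (φ0 i o = 0 →
      t0 i * (o.elim (cc i + h1 i) (fun j => c0 i j + h0 j)) ≥
        Finset.univ.inf' Finset.univ_nonempty
          (fun o' : Option (Fin n) => t0 i * (o'.elim (cc i + h1 i) (fun j => c0 i j + h0 j))))) ∧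
  (∀ i, i ≠ d → ∀ j,
    (0 < φ1 i (some j) →
      t1 i * (c1 i j + h1 j) =
        Finset.univ.inf' ⟨d, Finset.mem_univ d⟩ (fun j' : Fin n => t1 i * (c1 i j' + h1 j'))) ∧
    (φ1 i (some j) = 0 →
      t1 i * (c1 i j + h1 j) ≥
        Finset.univ.inf' ⟨d, Finset.mem_univ d⟩ (fun j' : Fin n => t1 i * (c1 i j' + h1 j'))))

/-! The instance has nodes `0, 1, 2`, data entering at `0`, free computation only at the
destination `2`, and free result transport. Routing the data along `0 → 1 → 2` costs `ρ`,
the direct link `0 → 2` costs `1`. The direct strategy is a KKT point because node `1`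
carries no traffic: all partial derivatives there vanish, so node `1` may forward back to `0`,
which inflates its marginal cost to `3` and makes the cheap route invisible from node `0`.
Optimality of the route via `1` is weak LP duality: the potential `π = (ρ, ρ/2, 0)` satisfies
`π i - π j ≤ c0 i j` and `π i ≤ cc i`, and summing these against the flow conservation equations
bounds the cost of every feasible strategy below by `∑ i, π i * r i = ρ`. -/

lemma mul_eq_inf'_of_forall_le {ι : Type*} [Fintype ι] (hne : (Finset.univ : Finset ι).Nonempty)
    {t : ℝ} (ht : 0 ≤ t) {δ : ι → ℝ} {o : ι} (hmin : ∀ o', δ o ≤ δ o') :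
    t * δ o = Finset.univ.inf' hne (fun o' => t * δ o') :=
  le_antisymm (Finset.le_inf' _ _ fun o' _ => mul_le_mul_of_nonneg_left (hmin o') ht)
    (Finset.inf'_le _ (Finset.mem_univ o))

section General

variable {n : ℕ} {d : Fin n} {c0 c1 : Fin n → Fin n → ℝ} {cc r : Fin n → ℝ}
  {φ0 φ1 : Fin n → Option (Fin n) → ℝ} {t0 t1 h0 h1 : Fin n → ℝ}

/-- The paper's `δ_{ij}` for stage `0`, with `none` standing for the local CPU. -/
def marginalCost0 (c0 : Fin n → Fin n → ℝ) (cc h0 h1 : Fin n → ℝ) (i : Fin n) :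
    Option (Fin n) → ℝ :=
  fun o => o.elim (cc i + h1 i) (fun j => c0 i j + h0 j)

lemma kktCondition_of_used_minimal (ht : ∀ i, 0 ≤ t0 i ∧ 0 ≤ t1 i)
    (hmin0 : ∀ i o, 0 < φ0 i o →
      t0 i = 0 ∨ ∀ o', marginalCost0 c0 cc h0 h1 i o ≤ marginalCost0 c0 cc h0 h1 i o')
    (hmin1 : ∀ i, i ≠ d → ∀ j, 0 < φ1 i (some j) →
      t1 i = 0 ∨ ∀ j', c1 i j + h1 j ≤ c1 i j' + h1 j') :
    KKTCondition n d c0 c1 cc φ0 φ1 t0 t1 h0 h1 := by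
  refine ⟨fun i o => ⟨fun hφ => ?_, fun _ => Finset.inf'_le _ (Finset.mem_univ o)⟩,
    fun i hi j => ⟨fun hφ => ?_, fun _ => Finset.inf'_le _ (Finset.mem_univ j)⟩⟩
  · rcases hmin0 i o hφ with hzero | hle
    · simp only [hzero, zero_mul]; exact (Finset.inf'_const _ _).symm
    · exact mul_eq_inf'_of_forall_le _ (ht i).1 hle
  · rcases hmin1 i hi j hφ with hzero | hle
    · simp only [hzero, zero_mul]; exact (Finset.inf'_const _ _).symm
    · exact mul_eq_inf'_of_forall_le (δ := fun j => c1 i j + h1 j) _ (ht i).2 hle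

lemma potential_le_totalCost (hφ : FeasibleStrategy n d φ0 φ1)
    (htr : TrafficEq n r φ0 φ1 t0 t1) (ht : ∀ i, 0 ≤ t0 i ∧ 0 ≤ t1 i) (hc1 : ∀ i j, 0 ≤ c1 i j)
    {π : Fin n → ℝ} (hπ : ∀ i j, π i - π j ≤ c0 i j) (hπcc : ∀ i, π i ≤ cc i) :
    ∑ i, π i * r i ≤ TotalCost n c0 c1 cc φ0 φ1 t0 t1 := by
  obtain ⟨hφ0, hφ1, hsum0, -, -, -⟩ := hφ
  set x : Fin n → Option (Fin n) → ℝ := fun i o => t0 i * φ0 i o with hx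
  have hx0 : ∀ i o, 0 ≤ x i o := fun i o => mul_nonneg (ht i).1 (hφ0 i o)
  have hout : ∀ i, t0 i = x i none + ∑ j, x i (some j) := fun i => by
    simp only [hx, ← Finset.mul_sum, ← mul_add, ← Fintype.sum_option, hsum0 i, mul_one]
  have hr : ∀ i, r i = x i none + ∑ j, x i (some j) - ∑ j, x j (some i) := fun i => by
    rw [← hout]; linarith [htr.1 i]
  have hbalance : ∑ i, π i * r i =
      ∑ i, π i * x i none + ∑ i, ∑ j, (π i - π j) * x i (some j) := by
    simp only [hr, mul_sub, mul_add, sub_mul, Finset.sum_sub_distrib, Finset.sum_add_distrib,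
      Finset.mul_sum]
    rw [Finset.sum_comm (f := fun i j => π i * x j (some i))]
    ring
  have hcpu : ∑ i, π i * x i none ≤ ∑ i, cc i * x i none :=
    Finset.sum_le_sum fun i _ => mul_le_mul_of_nonneg_right (hπcc i) (hx0 i _)
  have hlink : ∑ i, ∑ j, (π i - π j) * x i (some j) ≤ ∑ i, ∑ j, c0 i j * x i (some j) :=
    Finset.sum_le_sum fun i _ => Finset.sum_le_sum fun j _ =>
      mul_le_mul_of_nonneg_right (hπ i j) (hx0 i _)
  have hstage1 : 0 ≤ ∑ i, ∑ j, c1 i j * (t1 i * φ1 i (some j)) :=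
    Finset.sum_nonneg fun i _ => Finset.sum_nonneg fun j _ =>
      mul_nonneg (hc1 i j) (mul_nonneg (ht i).2 (hφ1 i _))
  rw [hbalance]
  unfold TotalCost
  linarith

def pureStrategy (next : Fin n → Option (Fin n)) : Fin n → Option (Fin n) → ℝ :=
  fun i o => if o = next i then 1 else 0

def directToDest (d : Fin n) : Fin n → Option (Fin n) → ℝ :=
  fun i o => if i ≠ d ∧ o = some d then 1 else 0

lemma feasibleStrategy_pure (d : Fin n) (next : Fin n → Option (Fin n)) :
    FeasibleStrategy n d (pureStrategy next) (directToDest d) := by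
  refine ⟨fun i o => ?_, fun i o => ?_, fun i => ?_, fun i => ?_, fun i hi => ?_, fun o => ?_⟩
  all_goals simp [pureStrategy, directToDest, apply_ite, *]

end General

noncomputable section

namespace SuboptimalKKTExample

def linkCost (ρ : ℝ) : Fin 3 → Fin 3 → ℝ := !![2, ρ / 2, 1; 2, 2, ρ / 2; 2, 2, 2]

def cpuCost : Fin 3 → ℝ := ![2, 2, 0]

def input : Fin 3 → ℝ := ![1, 0, 0]

def kktNext : Fin 3 → Option (Fin 3) := ![some 2, some 0, none]

def optNext : Fin 3 → Option (Fin 3) := ![some 1, some 2, none]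

def potential (ρ : ℝ) : Fin 3 → ℝ := ![ρ, ρ / 2, 0]

lemma linkCost_nonneg {ρ : ℝ} (hρ : 0 ≤ ρ) (i j : Fin 3) : 0 ≤ linkCost ρ i j := by
  fin_cases i <;> fin_cases j <;> norm_num [linkCost] <;> linarith

lemma trafficEq_kkt :
    TrafficEq 3 input (pureStrategy kktNext) (directToDest 2) ![1, 0, 1] ![0, 0, 1] := by
  constructor <;> intro i <;> fin_cases i <;>
    simp [input, pureStrategy, directToDest, kktNext, Fin.sum_univ_three]

lemma trafficEq_opt :
    TrafficEq 3 input (pureStrategy optNext) (directToDest 2) ![1, 1, 1] ![0, 0, 1] := by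
  constructor <;> intro i <;> fin_cases i <;>
    simp [input, pureStrategy, directToDest, optNext, Fin.sum_univ_three]

lemma marginalEq_kkt (ρ : ℝ) :
    MarginalEq 3 (linkCost ρ) 0 cpuCost (pureStrategy kktNext) (directToDest 2) ![1, 3, 0] 0 := by
  constructor <;> intro i <;> fin_cases i <;>
    simp [linkCost, cpuCost, pureStrategy, directToDest, kktNext]
  norm_num

lemma totalCost_kkt (ρ : ℝ) :
    TotalCost 3 (linkCost ρ) 0 cpuCost (pureStrategy kktNext) (directToDest 2)
      ![1, 0, 1] ![0, 0, 1] = 1 := by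
  simp [TotalCost, linkCost, cpuCost, pureStrategy, directToDest, kktNext, Fin.sum_univ_three]

lemma totalCost_opt (ρ : ℝ) :
    TotalCost 3 (linkCost ρ) 0 cpuCost (pureStrategy optNext) (directToDest 2)
      ![1, 1, 1] ![0, 0, 1] = ρ := by
  simp [TotalCost, linkCost, cpuCost, pureStrategy, directToDest, optNext, Fin.sum_univ_three]

lemma kktCondition_kkt {ρ : ℝ} (hρ0 : 0 < ρ) :
    KKTCondition 3 2 (linkCost ρ) 0 cpuCost (pureStrategy kktNext) (directToDest 2)
      ![1, 0, 1] ![0, 0, 1] ![1, 3, 0] 0 := by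
  refine kktCondition_of_used_minimal (fun i => ?_) (fun i o hφ => ?_) (fun i _ j _ => ?_)
  · fin_cases i <;> simp
  · fin_cases i <;> rcases o with _ | j <;> try fin_cases j
    all_goals simp [pureStrategy, kktNext] at hφ
    · right; rintro (_ | j') <;> try fin_cases j'
      all_goals norm_num [marginalCost0, linkCost, cpuCost] <;> linarith
    · -- forwarding back to node `0` is not cheapest, but node `1` carries no traffic
      left; rfl
    · right; rintro (_ | j') <;> try fin_cases j'
      all_goals norm_num [marginalCost0, linkCost, cpuCost]
  · exact Or.inr fun _ => le_rfl

lemma totalCost_opt_le {ρ : ℝ} (hρ0 : 0 < ρ) (hρ1 : ρ < 1) {φ0 φ1 : Fin 3 → Option (Fin 3) → ℝ}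
    {t0 t1 : Fin 3 → ℝ} (hφ : FeasibleStrategy 3 2 φ0 φ1) (htr : TrafficEq 3 input φ0 φ1 t0 t1)
    (ht : ∀ i, 0 ≤ t0 i ∧ 0 ≤ t1 i) :
    TotalCost 3 (linkCost ρ) 0 cpuCost (pureStrategy optNext) (directToDest 2)
      ![1, 1, 1] ![0, 0, 1] ≤ TotalCost 3 (linkCost ρ) 0 cpuCost φ0 φ1 t0 t1 := by
  have hπ : ∀ i j, potential ρ i - potential ρ j ≤ linkCost ρ i j := by
    intro i j; fin_cases i <;> fin_cases j <;> norm_num [potential, linkCost] <;> linarith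
  have hπcc : ∀ i, potential ρ i ≤ cpuCost i := by
    intro i; fin_cases i <;> norm_num [potential, cpuCost] <;> linarith
  calc _ = ∑ i, potential ρ i * input i := by
        rw [totalCost_opt]; simp [potential, input, Fin.sum_univ_three]
    _ ≤ _ := potential_le_totalCost hφ htr ht (fun _ _ => le_rfl) hπ hπcc

end SuboptimalKKTExample

end

open SuboptimalKKTExample in
/-- **Proposition 1.** For any `0 < ρ < 1` there exists a network instance with linear costs
and a single two-stage application, a feasible strategy `φ` satisfying the KKT condition, and
a globally optimal feasible strategy `φ*`, such that `D(φ*)/D(φ) = ρ`. -/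
theorem kkt_arbitrarily_suboptimal (ρ : ℝ) (hρ0 : 0 < ρ) (hρ1 : ρ < 1) :
    ∃ (n : ℕ) (d : Fin n) (c0 c1 : Fin n → Fin n → ℝ) (cc : Fin n → ℝ) (r : Fin n → ℝ)
      (φ0 φ1 φ0s φ1s : Fin n → Option (Fin n) → ℝ) (t0 t1 t0s t1s h0 h1 : Fin n → ℝ),
      (∀ i j, 0 ≤ c0 i j) ∧ (∀ i j, 0 ≤ c1 i j) ∧ (∀ i, 0 ≤ cc i) ∧ (∀ i, 0 ≤ r i) ∧
      -- the KKT point φ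
      FeasibleStrategy n d φ0 φ1 ∧ TrafficEq n r φ0 φ1 t0 t1 ∧ (∀ i, 0 ≤ t0 i ∧ 0 ≤ t1 i) ∧
      MarginalEq n c0 c1 cc φ0 φ1 h0 h1 ∧
      KKTCondition n d c0 c1 cc φ0 φ1 t0 t1 h0 h1 ∧
      -- the global optimum φ*
      FeasibleStrategy n d φ0s φ1s ∧ TrafficEq n r φ0s φ1s t0s t1s ∧
      (∀ i, 0 ≤ t0s i ∧ 0 ≤ t1s i) ∧
      (∀ φ0' φ1' t0' t1', FeasibleStrategy n d φ0' φ1' → TrafficEq n r φ0' φ1' t0' t1' →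
        (∀ i, 0 ≤ t0' i ∧ 0 ≤ t1' i) →
        TotalCost n c0 c1 cc φ0s φ1s t0s t1s ≤ TotalCost n c0 c1 cc φ0' φ1' t0' t1') ∧
      -- the suboptimality ratio
      TotalCost n c0 c1 cc φ0s φ1s t0s t1s / TotalCost n c0 c1 cc φ0 φ1 t0 t1 = ρ := by
  refine ⟨3, 2, linkCost ρ, 0, cpuCost, input, pureStrategy kktNext, directToDest 2,
    pureStrategy optNext, directToDest 2, ![1, 0, 1], ![0, 0, 1], ![1, 1, 1], ![0, 0, 1],
    ![1, 3, 0], 0, linkCost_nonneg hρ0.le, fun _ _ => le_rfl, ?_, ?_,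
    feasibleStrategy_pure 2 kktNext, trafficEq_kkt, ?_, marginalEq_kkt ρ, kktCondition_kkt hρ0,
    feasibleStrategy_pure 2 optNext, trafficEq_opt, ?_, fun _ _ _ _ => totalCost_opt_le hρ0 hρ1,
    by rw [totalCost_opt, totalCost_kkt, div_one]⟩
  all_goals intro i; fin_cases i <;> norm_num [cpuCost, input]
end

section
/- Suppose for every node i and every stage (a,k) the value h_i(a,k) := ∂D/∂t_i(a,k) satisfies h_i(a,k) = Σ_j φ_{ij}(a,k)·(c_{ij}(a,k) + h_j(a,k)) + φ_{i0}(a,k)·(w_i(a,k)·C'_i + h_i(a,k+1)) with all c_{ij}(a,k) > 0 and C'_i ≥ 0, h ≥ 0. Then along any directed path n_1, ..., n_L with φ_{n_l n_{l+1}}(a,k) > 0 for each l, the sequence h_{n_l}(a,k) is strictly decreasing, provided φ satisfies the sufficiency condition that positive fractions are only placed on directions j minimizing c_{ij}(a,k) + h_j(a,k) (resp. w_i C'_i + h_i(a,k+1) for j = 0). -/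
/-!
By the recursion, `h i` is the `φ i`-weighted average of the modified marginals
`δ i o` (`c i j + h j` for a neighbour `j`, `q i + hnext i` for `o = none`). The sufficiency
condition puts all the weight on minimizers, so the average is the minimum:
`h i = min_o δ i o`. On a used link `i → j` this minimum is attained at `j`, hence
`h j = h i - c i j < h i`.
-/

open Finset

theorem Finset.sum_mul_eq_of_ne_zero_imp_eq {ι R : Type*} [NonAssocSemiring R]
    (s : Finset ι) (w f : ι → R) (m : R) (hw : ∑ i ∈ s, w i = 1)
    (hf : ∀ i ∈ s, w i ≠ 0 → f i = m) :
    ∑ i ∈ s, w i * f i = m := by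
  calc ∑ i ∈ s, w i * f i = ∑ i ∈ s, w i * m := by
        refine sum_congr rfl fun i hi => ?_
        by_cases hwi : w i = 0
        · simp [hwi]
        · rw [hf i hi hwi]
    _ = m := by rw [← sum_mul, hw, one_mul]

section Marginals

variable {V : Type*} [Fintype V] (φ : V → Option V → ℝ) (c : V → V → ℝ) (q : V → ℝ)
  (h hnext : V → ℝ)

/-- `none` is the direction "compute at `i` and pass on to stage `k+1`". -/
def modifiedMarginal (i : V) (o : Option V) : ℝ :=
  o.elim (q i + hnext i) (fun j => c i j + h j)

theorem marginal_eq_sum_modifiedMarginal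
    (hrec : ∀ i, h i = (∑ j, φ i (some j) * (c i j + h j)) + φ i none * (q i + hnext i))
    (i : V) :
    h i = ∑ o, φ i o * modifiedMarginal c q h hnext i o := by
  rw [hrec i, Fintype.sum_option, add_comm]
  rfl

theorem marginal_eq_inf'_modifiedMarginal
    (hφnn : ∀ i o, 0 ≤ φ i o) (hφsum : ∀ i, ∑ o, φ i o = 1)
    (hrec : ∀ i, h i = (∑ j, φ i (some j) * (c i j + h j)) + φ i none * (q i + hnext i))
    (hsuff : ∀ i o, 0 < φ i o → modifiedMarginal c q h hnext i o =
      univ.inf' univ_nonempty (modifiedMarginal c q h hnext i))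
    (i : V) :
    h i = univ.inf' univ_nonempty (modifiedMarginal c q h hnext i) := by
  rw [marginal_eq_sum_modifiedMarginal φ c q h hnext hrec i]
  exact sum_mul_eq_of_ne_zero_imp_eq _ _ _ _ (hφsum i)
    fun o _ hne => hsuff i o ((hφnn i o).lt_of_ne' hne)

end Marginals

theorem marginal_strictly_decreasing_along_path_general {V : Type*} [Fintype V]
    (φ : V → Option V → ℝ) (c : V → V → ℝ) (q : V → ℝ) (h hnext : V → ℝ)
    (hφnn : ∀ i o, 0 ≤ φ i o) (hφsum : ∀ i, ∑ o, φ i o = 1)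
    (hc : ∀ i j, 0 < c i j)
    (hrec : ∀ i, h i = (∑ j, φ i (some j) * (c i j + h j)) + φ i none * (q i + hnext i))
    (hsuff : ∀ i o, 0 < φ i o →
      o.elim (q i + hnext i) (fun j => c i j + h j) =
        Finset.univ.inf' Finset.univ_nonempty
          (fun o' : Option V => o'.elim (q i + hnext i) (fun j => c i j + h j)))
    (L : ℕ) (p : ℕ → V)
    (hpath : ∀ l, l + 1 < L → 0 < φ (p l) (some (p (l + 1)))) :
    ∀ l, l + 1 < L → h (p (l + 1)) < h (p l) := by
  intro l hl
  have hmin := marginal_eq_inf'_modifiedMarginal φ c q h hnext hφnn hφsum hrec hsuff (p l)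
  have hused : c (p l) (p (l + 1)) + h (p (l + 1)) = h (p l) :=
    (hsuff _ _ (hpath l hl)).trans hmin.symm
  linarith [hc (p l) (p (l + 1))]

/-- Monotone decrease of node marginals along used paths. Fix a stage `(a,k)`; `h i` is the
node marginal `∂D/∂t_i(a,k)`, `hnext i` the next-stage marginal `∂D/∂t_i(a,k+1)`,
`c i j > 0` the link marginal costs, `q i = w_i·C'_i ≥ 0` the computation marginal.
If `h` satisfies the weighted-average recursion and `φ` places positive mass only on
directions minimizing the modified marginal (sufficiency condition), then `h` strictly
decreases along any directed path with positive forwarding fractions. -/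
theorem marginal_strictly_decreasing_along_path {V : Type*} [Fintype V]
    (φ : V → Option V → ℝ) (c : V → V → ℝ) (q : V → ℝ) (h hnext : V → ℝ)
    (hφnn : ∀ i o, 0 ≤ φ i o) (hφsum : ∀ i, ∑ o, φ i o = 1)
    (hc : ∀ i j, 0 < c i j) (hq : ∀ i, 0 ≤ q i)
    (hh : ∀ i, 0 ≤ h i) (hhnext : ∀ i, 0 ≤ hnext i)
    (hrec : ∀ i, h i = (∑ j, φ i (some j) * (c i j + h j)) + φ i none * (q i + hnext i))
    (hsuff : ∀ i o, 0 < φ i o →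
      o.elim (q i + hnext i) (fun j => c i j + h j) =
        Finset.univ.inf' Finset.univ_nonempty
          (fun o' : Option V => o'.elim (q i + hnext i) (fun j => c i j + h j)))
    (L : ℕ) (p : ℕ → V)
    (hpath : ∀ l, l + 1 < L → 0 < φ (p l) (some (p (l + 1)))) :
    ∀ l, l + 1 < L → h (p (l + 1)) < h (p l) :=
  marginal_strictly_decreasing_along_path_general φ c q h hnext hφnn hφsum hc hrec hsuff L p hpath
end
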